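/- Let A = (Q, Σ, δ, P) be an exact ε-machine with steady state distribution π. Then the limit lim_{L→∞} (P_π(NSYN_L))^{1/L} exists and equals the spectral radius of the nonnegative matrix T(A₂); in other words, the synchronization rate constant src(A) is the largest eigenvalue (spectral radius) of T(A₂), and it satisfies src(A) < 1. -/

import Mathlib

open scoped BigOperators ENNReal

attribute [local instance] Classical.propDecidable

variable {Q A : Type*}

/-- Extension of a partial transition function to words. -/
def stepWord (δ : Q → A → Option Q) : Q → List A → Option Q
  | q, [] => some q
  | q, a :: w => (δ q a).bind fun q' => stepWord δ q' w

/-- Probability of generating a word from a given state. -/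
noncomputable def probWord (P : Q → A → ℝ) (δ : Q → A → Option Q) : Q → List A → ℝ
  | _, [] => 1
  | p, a :: w => P p a * ((δ p a).elim 0 fun p' => probWord P δ p' w)

/-- `w` is a reset word: the set of defined images of all states under `w` is a singleton. -/
def IsResetWord (δ : Q → A → Option Q) (w : List A) : Prop :=
  ∃ r : Q, (∃ q : Q, stepWord δ q w = some r) ∧ ∀ q s : Q, stepWord δ q w = some s → s = r

/-- `w` merges the pair `{p, q}` : the set of defined images of `p` and `q` under `w`
is a singleton. -/
def MergedBy (δ : Q → A → Option Q) (p q : Q) (w : List A) : Prop :=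
  ∃ r : Q, (stepWord δ p w = some r ∨ stepWord δ q w = some r) ∧
    (∀ s : Q, stepWord δ p w = some s → s = r) ∧ ∀ s : Q, stepWord δ q w = some s → s = r

/-- A deadlock pair : a pair of distinct states that no word merges. -/
def IsDeadlockPair (δ : Q → A → Option Q) (p q : Q) : Prop :=
  p ≠ q ∧ ∀ w : List A, ¬ MergedBy δ p q w

/-- An ε-machine. -/
structure EpsMachine (Q A : Type*) [Fintype Q] [Fintype A] : Type _ where
  δ : Q → A → Option Q
  P : Q → A → ℝ
  nonneg : ∀ q a, 0 ≤ P q a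
  sum_one : ∀ q : Q, ∑ a : A, P q a = 1
  zero_iff : ∀ q a, P q a = 0 ↔ δ q a = none
  strong_conn : ∀ p q : Q, ∃ w : List A, stepWord δ p w = some q
  card_alpha : 1 < Fintype.card A
  nonequiv : ∀ p q : Q, p ≠ q → ∃ u : List A, probWord P δ p u ≠ probWord P δ q u

/-- An ε-machine is exact if it admits a reset word. -/
def IsExact [Fintype Q] [Fintype A] (M : EpsMachine Q A) : Prop :=
  ∃ w : List A, IsResetWord M.δ w

/-- Transition function of the pair semi-machine `A₂`. -/
noncomputable def pairStep (δ : Q → A → Option Q) (pq : Q × Q) (a : A) : Option (Q × Q) :=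
  match δ pq.1 a, δ pq.2 a with
  | some p', some q' => if p' = q' then none else some (p', q')
  | _, _ => none

/-- Weights of the pair semi-machine `A₂`. -/
noncomputable def pairP (δ : Q → A → Option Q) (P : Q → A → ℝ) (pq : Q × Q) (a : A) : ℝ :=
  if pairStep δ pq a = none then 0 else P pq.1 a

/-- The states of the pair semi-machine : ordered pairs of distinct states. -/
abbrev PairState (Q : Type*) := {pq : Q × Q // pq.1 ≠ pq.2}

variable [Fintype Q] [Fintype A]

/-- The transition probability matrix `T(A₂)` of the pair semi-machine. -/
noncomputable def pairMatrix (δ : Q → A → Option Q) (P : Q → A → ℝ) :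
    Matrix (PairState Q) (PairState Q) ℝ :=
  fun s t => ∑ a : A, if pairStep δ s.val a = some t.val then P s.val.1 a else 0

/-- `R^L_{p,q}` : the sum of the `(p,q)`-th row entries of `T(A₂)^L`. -/
noncomputable def RLrow (δ : Q → A → Option Q) (P : Q → A → ℝ) (L : ℕ) (s : PairState Q) : ℝ :=
  ∑ t : PairState Q, (pairMatrix δ P ^ L) s t

/-- `R^L_p = ∑_{q ≠ p} R^L_{p,q}`. -/
noncomputable def RLp (δ : Q → A → Option Q) (P : Q → A → ℝ) (L : ℕ) (p : Q) : ℝ :=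
  ∑ q : Q, if h : p = q then 0 else RLrow δ P L ⟨(p, q), h⟩

/-- `MaxR^L_p = max_{q ≠ p} R^L_{p,q}`. -/
noncomputable def MaxRLp (δ : Q → A → Option Q) (P : Q → A → ℝ) (L : ℕ) (p : Q) : ℝ :=
  sSup {x : ℝ | ∃ (q : Q) (h : p ≠ q), x = RLrow δ P L ⟨(p, q), h⟩}

/-- `π` is a positive stationary (steady state) probability distribution of the Markov chain
on the machine states with transition probabilities `P(p → q) = ∑_{x : p.x = q} P_p(x)`. -/
def IsStationaryDist (δ : Q → A → Option Q) (P : Q → A → ℝ) (π : Q → ℝ) : Prop :=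
  (∀ q, 0 < π q) ∧ (∑ q : Q, π q = 1) ∧
    ∀ q : Q, π q = ∑ p : Q, π p * ∑ a : A, if δ p a = some q then P p a else 0

/-- `P_π(w) = ∑_q π_q P_q(w)`. -/
noncomputable def Ppi (δ : Q → A → Option Q) (P : Q → A → ℝ) (π : Q → ℝ) (w : List A) : ℝ :=
  ∑ q : Q, π q * probWord P δ q w

/-- `P_π(NSYN_L)` : the probability of generating a non-reset word of length `L`. -/
noncomputable def nsynProb (δ : Q → A → Option Q) (P : Q → A → ℝ) (π : Q → ℝ) (L : ℕ) : ℝ :=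
  ∑ w : Fin L → A, if IsResetWord δ (List.ofFn w) then 0 else Ppi δ P π (List.ofFn w)

/-- The maximum row sum (the `‖·‖₁` norm of a nonnegative matrix). -/
noncomputable def maxRowSum {n : Type*} [Fintype n] (T : Matrix n n ℝ) : ℝ :=
  sSup {x : ℝ | ∃ s : n, x = ∑ t : n, T s t}

/-- The belief distribution `φ(w)` of the observer after the machine generated `w`. -/
noncomputable def belief (δ : Q → A → Option Q) (P : Q → A → ℝ) (π : Q → ℝ)
    (w : List A) (q : Q) : ℝ :=
  (∑ p : Q, if stepWord δ p w = some q then π p * probWord P δ p w else 0) / Ppi δ P π w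

/-- `Q_L(w) = 1 - max_q φ(w)_q` : the combined probability of all states other than the
most likely one. -/
noncomputable def QLw (δ : Q → A → Option Q) (P : Q → A → ℝ) (π : Q → ℝ) (w : List A) : ℝ :=
  1 - sSup (Set.range (belief δ P π w))

/-- `P(Q_L > b^L)`. -/
noncomputable def probQLgt (δ : Q → A → Option Q) (P : Q → A → ℝ) (π : Q → ℝ)
    (b : ℝ) (L : ℕ) : ℝ :=
  ∑ w : Fin L → A, if b ^ L < QLw δ P π (List.ofFn w) then Ppi δ P π (List.ofFn w) else 0

/-- The prediction rate constant `prc(A)` : the infimum of all `a > 0` such that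
`P(Q_L > a^L) → 0` as `L → ∞`. -/
noncomputable def prc (δ : Q → A → Option Q) (P : Q → A → ℝ) (π : Q → ℝ) : ℝ :=
  sInf {a : ℝ | 0 < a ∧
    Filter.Tendsto (fun L : ℕ => probQLgt δ P π a L) Filter.atTop (nhds 0)}

/-- `E(Q_L^{1/L})`. -/
noncomputable def EQL (δ : Q → A → Option Q) (P : Q → A → ℝ) (π : Q → ℝ) (L : ℕ) : ℝ :=
  ∑ w : Fin L → A, Ppi δ P π (List.ofFn w) * QLw δ P π (List.ofFn w) ^ ((L : ℝ)⁻¹)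

/-- `E(1/Q_L^{1/L})`, computed in the extended reals (with `1/0 = ∞`). -/
noncomputable def EinvQL (δ : Q → A → Option Q) (P : Q → A → ℝ) (π : Q → ℝ) (L : ℕ) : ℝ≥0∞ :=
  ∑ w : Fin L → A, ENNReal.ofReal (Ppi δ P π (List.ofFn w)) *
    (ENNReal.ofReal (QLw δ P π (List.ofFn w)))⁻¹ ^ ((L : ℝ)⁻¹)

/-- A deadlock component : a nonempty, strongly connected set of deadlock pairs closed
under the action of all letters. -/
def IsDeadlockComponent (δ : Q → A → Option Q) (S : Set (Q × Q)) : Prop :=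
  S.Nonempty ∧ (∀ pq ∈ S, IsDeadlockPair δ pq.1 pq.2) ∧
    (∀ pq ∈ S, ∀ a : A, ∀ r : Q × Q, pairStep δ pq a = some r → r ∈ S) ∧
    ∀ pq ∈ S, ∀ rs ∈ S, ∃ w : List A, stepWord (pairStep δ) pq w = some rs

/-- The states of the edge machine `M_edge` of a component `S` of the pair semi-machine :
pairs `(x, k)` with `k ∈ S` and `P_k(x) > 0`. -/
abbrev EdgeState (δ : Q → A → Option Q) (P : Q → A → ℝ) (S : Set (Q × Q)) :=
  {e : A × (Q × Q) // e.2 ∈ S ∧ 0 < pairP δ P e.2 e.1}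

/-- `ρ` is a stationary (equilibrium) distribution of the edge machine `M_edge`,
whose transition probabilities are `P((x,k) → (y,j)) = P_j(y)·I(x,k,j)`. -/
def IsEdgeStationary (δ : Q → A → Option Q) (P : Q → A → ℝ) (S : Set (Q × Q))
    (ρ : EdgeState δ P S → ℝ) : Prop :=
  (∀ r, 0 ≤ ρ r) ∧ (∑ r : EdgeState δ P S, ρ r = 1) ∧
    ∀ t : EdgeState δ P S, ρ t = ∑ s : EdgeState δ P S, ρ s *
      (if pairStep δ s.val.2 s.val.1 = some t.val.2 then pairP δ P t.val.2 t.val.1 else 0)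

/-- `E_M = ∑_r ρ_r F(r)` where `F((x,(p,q))) = ln (P_p(x) / P_q(x))`. -/
noncomputable def EMval (δ : Q → A → Option Q) (P : Q → A → ℝ) (S : Set (Q × Q))
    (ρ : EdgeState δ P S → ℝ) : ℝ :=
  ∑ r : EdgeState δ P S, ρ r * Real.log (P r.val.2.1 r.val.1 / P r.val.2.2 r.val.1)


/-! Counting paths in the pair semi-machine, the row sum of `T(A₂)^L` at `(p, q)` is the
probability, from `p`, of the words of length `L` along which `p` and `q` stay defined and distinct.
A word is not a reset word exactly when some pair survives it, so `P_π(NSYN_L)` is squeezed between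
constant multiples of the entry sum of `T(A₂)^L`.

For a nonnegative matrix the `L`-th roots of the entry sums of its powers converge (Fekete) to a
limit `r` bounding every real eigenvalue, and `r` is itself an eigenvalue: otherwise the resolvent
would be continuous at `r`, while for `λ > r` its entry sum dominates
`∑ r ^ L / λ ^ (L + 1) = 1 / (λ - r)`.

Exactness and strong connectivity give every pair a word that kills it with positive probability,
so some power of `T(A₂)` has all row sums below `1`, which forces the spectral radius below `1`. -/

open Filter Topology Finset

theorem exists_pos_forall_le {ι : Type*} [Finite ι] {f : ι → ℝ} (hf : ∀ i, 0 < f i) :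
    ∃ c, 0 < c ∧ ∀ i, c ≤ f i := by
  cases isEmpty_or_nonempty ι
  · exact ⟨1, one_pos, fun i => isEmptyElim i⟩
  · obtain ⟨i₀, hi₀⟩ := Finite.exists_min f
    exact ⟨f i₀, hf i₀, hi₀⟩

theorem tendsto_rpow_inv_of_mul_le_of_le {x S : ℕ → ℝ} {a ρ : ℝ} (ha : 0 < a)
    (hx : ∀ L, 0 ≤ x L) (hlow : ∀ L, a * S L ≤ x L) (hup : ∀ L, x L ≤ S L)
    (hS : Tendsto (fun L : ℕ => S L ^ ((L : ℝ)⁻¹)) atTop (𝓝 ρ)) :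
    Tendsto (fun L : ℕ => x L ^ ((L : ℝ)⁻¹)) atTop (𝓝 ρ) := by
  have hS0 : ∀ L, 0 ≤ S L := fun L => (hx L).trans (hup L)
  have ha1 : Tendsto (fun L : ℕ => a ^ ((L : ℝ)⁻¹)) atTop (𝓝 1) := by
    simpa using tendsto_const_nhds.rpow
      (tendsto_inv_atTop_zero.comp tendsto_natCast_atTop_atTop) (Or.inl ha.ne')
  refine tendsto_of_tendsto_of_tendsto_of_le_of_le (by simpa using ha1.mul hS) hS
    (fun L => ?_) (fun L => Real.rpow_le_rpow (hx L) (hup L) (by positivity))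
  rw [← Real.mul_rpow ha.le (hS0 L)]
  exact Real.rpow_le_rpow (mul_nonneg ha.le (hS0 L)) (hlow L) (by positivity)

section Spectrum

variable {B : Type*} [Ring B] [Algebra ℝ B] {b : B} {r : ℝ}

theorem spectralRadius_le_ofReal (h : ∀ x ∈ spectrum ℝ b, |x| ≤ r) :
    spectralRadius ℝ b ≤ ENNReal.ofReal r :=
  iSup₂_le fun x hx => by
    rw [← ENNReal.ofReal_coe_nnreal, coe_nnnorm, Real.norm_eq_abs]
    exact ENNReal.ofReal_le_ofReal (h x hx)

theorem spectralRadius_toReal_eq (hmem : r ∈ spectrum ℝ b) (h : ∀ x ∈ spectrum ℝ b, |x| ≤ r) :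
    (spectralRadius ℝ b).toReal = r := by
  have hr : 0 ≤ r := (abs_nonneg r).trans (h r hmem)
  refine le_antisymm (ENNReal.toReal_le_of_le_ofReal hr (spectralRadius_le_ofReal h)) ?_
  have hle : ENNReal.ofReal r ≤ spectralRadius ℝ b := by
    rw [← abs_of_nonneg hr, ← Real.norm_eq_abs, ← coe_nnnorm, ENNReal.ofReal_coe_nnreal]
    exact le_iSup₂ (f := fun k (_ : k ∈ spectrum ℝ b) => (‖k‖₊ : ENNReal)) r hmem
  simpa [hr] using ENNReal.toReal_mono (ne_top_of_le_ne_top ENNReal.ofReal_ne_top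
    (spectralRadius_le_ofReal h)) hle

theorem smul_geom_sum_eq_resolvent_sub {l : ℝ} (hl : l ≠ 0) (hres : l ∈ resolventSet ℝ b)
    (N : ℕ) :
    l⁻¹ • ∑ L ∈ range N, (l⁻¹ • b) ^ L = resolvent b l - resolvent b l * (l⁻¹ • b) ^ N := by
  set X := l⁻¹ • b
  have hR : resolvent b l * (l • (1 - X)) = 1 := by
    rw [smul_sub, smul_smul, mul_inv_cancel₀ hl, one_smul, ← Algebra.algebraMap_eq_smul_one]
    exact Ring.inverse_mul_cancel _ hres
  calc l⁻¹ • ∑ L ∈ range N, X ^ L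
      = resolvent b l * (l • (1 - X)) * (l⁻¹ • ∑ L ∈ range N, X ^ L) := by rw [hR, one_mul]
    _ = resolvent b l * ((1 - X) * ∑ L ∈ range N, X ^ L) := by
        rw [mul_assoc, smul_mul_smul_comm, mul_inv_cancel₀ hl, one_smul]
    _ = resolvent b l - resolvent b l * X ^ N := by rw [mul_neg_geom_sum, mul_sub, mul_one]

end Spectrum

section NonnegMatrix

variable {n : Type*} [Fintype n]

def entrySum (A : Matrix n n ℝ) : ℝ := ∑ i, ∑ j, A i j

theorem rowSum_mul_le {A B : Matrix n n ℝ} (hA : ∀ i j, 0 ≤ A i j) {θ : ℝ}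
    (hB : ∀ u, ∑ j, B u j ≤ θ) (i : n) : ∑ j, (A * B) i j ≤ (∑ u, A i u) * θ := by
  simp only [Matrix.mul_apply]
  rw [Finset.sum_comm, Finset.sum_mul]
  gcongr with u
  rw [← Finset.mul_sum]
  exact mul_le_mul_of_nonneg_left (hB u) (hA i u)

theorem rowSum_le_entrySum {A : Matrix n n ℝ} (hA : ∀ i j, 0 ≤ A i j) (i : n) :
    ∑ j, A i j ≤ entrySum A :=
  Finset.single_le_sum (f := fun i => ∑ j, A i j)
    (fun i _ => Finset.sum_nonneg fun j _ => hA i j) (Finset.mem_univ i)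

theorem entrySum_nonneg {A : Matrix n n ℝ} (hA : ∀ i j, 0 ≤ A i j) : 0 ≤ entrySum A :=
  Finset.sum_nonneg fun i _ => Finset.sum_nonneg fun j _ => hA i j

theorem entrySum_mul_le {A B : Matrix n n ℝ} (hA : ∀ i j, 0 ≤ A i j) (hB : ∀ i j, 0 ≤ B i j) :
    entrySum (A * B) ≤ entrySum A * entrySum B := by
  rw [entrySum, entrySum, Finset.sum_mul]
  exact Finset.sum_le_sum fun i _ => rowSum_mul_le hA (rowSum_le_entrySum hB) i

theorem abs_pow_le_of_mem_spectrum [DecidableEq n] {T : Matrix n n ℝ} (hT : ∀ i j, 0 ≤ T i j)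
    {x : ℝ} (hx : x ∈ spectrum ℝ T) {L : ℕ} {θ : ℝ} (hθ : ∀ i, ∑ j, (T ^ L) i j ≤ θ) :
    |x| ^ L ≤ θ := by
  rw [← Matrix.spectrum_toLin', ← Module.End.hasEigenvalue_iff_mem_spectrum] at hx
  obtain ⟨v, hv⟩ := hx.exists_hasEigenvector
  have hpow : (T ^ L).mulVec v = x ^ L • v := by
    rw [← Matrix.toLin'_apply, Matrix.toLin'_pow]; exact hv.pow_apply L
  obtain ⟨j, hj⟩ := Function.ne_iff.mp hv.2
  obtain ⟨i, -, hi⟩ := Finset.exists_max_image Finset.univ (fun i => |v i|) ⟨j, mem_univ j⟩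
  have hvi : 0 < |v i| := (abs_pos.mpr hj).trans_le (hi j (mem_univ j))
  refine le_of_mul_le_mul_right ?_ hvi
  calc |x| ^ L * |v i| = |∑ t, (T ^ L) i t * v t| := by
        rw [← abs_pow, ← abs_mul, ← smul_eq_mul, ← Pi.smul_apply, ← hpow]; rfl
    _ ≤ ∑ t, (T ^ L) i t * |v i| := by
        refine (Finset.abs_sum_le_sum_abs _ _).trans (Finset.sum_le_sum fun t _ => ?_)
        have h := Matrix.pow_apply_nonneg hT L i t
        rw [abs_mul, abs_of_nonneg h]
        exact mul_le_mul_of_nonneg_left (hi t (mem_univ t)) h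
    _ ≤ θ * |v i| := by
        rw [← Finset.sum_mul]
        exact mul_le_mul_of_nonneg_right (hθ i) hvi.le

theorem entrySum_smul (c : ℝ) (A : Matrix n n ℝ) : entrySum (c • A) = c * entrySum A := by
  simp [entrySum, Finset.mul_sum]

theorem entrySum_sum {ι : Type*} (s : Finset ι) (A : ι → Matrix n n ℝ) :
    entrySum (∑ k ∈ s, A k) = ∑ k ∈ s, entrySum (A k) := by
  simp only [entrySum, Matrix.sum_apply]
  exact (Finset.sum_congr rfl fun _ _ => Finset.sum_comm).trans Finset.sum_comm

theorem entrySum_continuous : Continuous (entrySum : Matrix n n ℝ → ℝ) := by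
  unfold entrySum; fun_prop

section Pow

variable [DecidableEq n] {T : Matrix n n ℝ}

theorem rowSum_pow_le_one (hT : ∀ i j, 0 ≤ T i j) (hT1 : ∀ i, ∑ j, T i j ≤ 1) (L : ℕ) (i : n) :
    ∑ j, (T ^ L) i j ≤ 1 := by
  induction L generalizing i with
  | zero => simp [Matrix.one_apply]
  | succ L ih =>
    rw [pow_succ]
    exact (rowSum_mul_le (Matrix.pow_apply_nonneg hT L) hT1 i).trans (by simpa using ih i)

theorem rowSum_pow_antitone (hT : ∀ i j, 0 ≤ T i j) (hT1 : ∀ i, ∑ j, T i j ≤ 1) {L M : ℕ}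
    (hLM : L ≤ M) (i : n) : ∑ j, (T ^ M) i j ≤ ∑ j, (T ^ L) i j := by
  rw [← Nat.add_sub_cancel' hLM, pow_add]
  simpa using rowSum_mul_le (Matrix.pow_apply_nonneg hT L) (rowSum_pow_le_one hT hT1 _) i

theorem exists_pow_le_pow_apply (hT : ∀ i j, 0 ≤ T i j) :
    ∃ c, 0 < c ∧ ∀ L i j, 0 < (T ^ L) i j → c ^ L ≤ (T ^ L) i j := by
  obtain ⟨c, hc, hcT⟩ := exists_pos_forall_le
    (f := fun e : n × n => if 0 < T e.1 e.2 then T e.1 e.2 else 1)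
    (fun e => by split_ifs with h; exacts [h, one_pos])
  refine ⟨c, hc, fun L => ?_⟩
  induction L with
  | zero =>
    intro i j hpos
    simp only [pow_zero, Matrix.one_apply] at hpos ⊢
    split_ifs at hpos ⊢ <;> simp_all
  | succ L ih =>
    intro i j hpos
    rw [pow_succ T L, Matrix.mul_apply] at hpos ⊢
    obtain ⟨u, -, hu⟩ := (Finset.sum_pos_iff_of_nonneg fun u _ =>
      mul_nonneg (Matrix.pow_apply_nonneg hT L i u) (hT u j)).mp hpos
    have h1 : 0 < (T ^ L) i u := (Matrix.pow_apply_nonneg hT L i u).lt_of_ne'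
      (left_ne_zero_of_mul hu.ne')
    have h2 : 0 < T u j := (hT u j).lt_of_ne' (right_ne_zero_of_mul hu.ne')
    calc c ^ (L + 1) = c ^ L * c := pow_succ c L
      _ ≤ (T ^ L) i u * T u j :=
        mul_le_mul (ih i u h1) (by simpa [h2] using hcT (u, j)) hc.le h1.le
      _ ≤ ∑ v, (T ^ L) i v * T v j :=
        Finset.single_le_sum (f := fun v => (T ^ L) i v * T v j)
          (fun v _ => mul_nonneg (Matrix.pow_apply_nonneg hT L i v) (hT v j)) (mem_univ u)

theorem exists_pow_le_entrySum_pow (hT : ∀ i j, 0 ≤ T i j) (hpos : ∀ L, 0 < entrySum (T ^ L)) :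
    ∃ c, 0 < c ∧ ∀ L, c ^ L ≤ entrySum (T ^ L) := by
  obtain ⟨c, hc, hcT⟩ := exists_pow_le_pow_apply hT
  refine ⟨c, hc, fun L => ?_⟩
  have hT' := Matrix.pow_apply_nonneg hT L
  obtain ⟨i, -, hi⟩ := (Finset.sum_pos_iff_of_nonneg fun i _ =>
    Finset.sum_nonneg fun j _ => hT' i j).mp (hpos L)
  obtain ⟨j, -, hj⟩ := (Finset.sum_pos_iff_of_nonneg fun j _ => hT' i j).mp hi
  exact (hcT L i j hj).trans ((Finset.single_le_sum (fun j _ => hT' i j) (mem_univ j)).trans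
    (rowSum_le_entrySum hT' i))

theorem exists_tendsto_entrySum_pow_rpow (hT : ∀ i j, 0 ≤ T i j)
    (hpos : ∀ L, 0 < entrySum (T ^ L)) :
    ∃ r, 0 < r ∧ (∀ L, r ^ L ≤ entrySum (T ^ L)) ∧
      Tendsto (fun L : ℕ => entrySum (T ^ L) ^ ((L : ℝ)⁻¹)) atTop (𝓝 r) := by
  obtain ⟨c, hc, hcS⟩ := exists_pow_le_entrySum_pow hT hpos
  set u : ℕ → ℝ := fun L => Real.log (entrySum (T ^ L))
  have hsub : Subadditive u := fun L M => by
    simp only [u]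
    rw [← Real.log_mul (hpos L).ne' (hpos M).ne', pow_add]
    exact Real.log_le_log (pow_add T L M ▸ hpos _) (entrySum_mul_le (Matrix.pow_apply_nonneg hT L)
      (Matrix.pow_apply_nonneg hT M))
  have hlog : ∀ L : ℕ, Real.log c * L ≤ u L := fun L => by
    simpa [Real.log_pow, mul_comm] using Real.log_le_log (pow_pos hc L) (hcS L)
  have hbdd : BddBelow (Set.range fun L => u L / L) := by
    refine ⟨min 0 (Real.log c), ?_⟩
    rintro _ ⟨L, rfl⟩
    rcases Nat.eq_zero_or_pos L with rfl | hL
    · simp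
    · exact (min_le_right _ _).trans ((le_div_iff₀ (by exact_mod_cast hL)).mpr (hlog L))
  refine ⟨Real.exp hsub.lim, Real.exp_pos _, fun L => ?_, ?_⟩
  · rcases Nat.eq_zero_or_pos L with rfl | hL
    · simpa using hcS 0
    · have h := (le_div_iff₀ (by exact_mod_cast hL)).mp (hsub.lim_le_div hbdd hL.ne')
      rw [← Real.exp_nat_mul, ← Real.exp_log (hpos L)]
      exact Real.exp_le_exp.mpr (by linarith)
  · refine ((Real.continuous_exp.tendsto _).comp (hsub.tendsto_lim hbdd)).congr fun L => ?_
    simp [u, Real.rpow_def_of_pos (hpos L), div_eq_mul_inv]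

theorem tendsto_entrySum_pow_div_pow (hT : ∀ i j, 0 ≤ T i j) {r l : ℝ} (hr : 0 ≤ r)
    (hrl : r < l) (hlim : Tendsto (fun L : ℕ => entrySum (T ^ L) ^ ((L : ℝ)⁻¹)) atTop (𝓝 r)) :
    Tendsto (fun N : ℕ => entrySum (T ^ N) / l ^ N) atTop (𝓝 0) := by
  have hl : 0 < l := hr.trans_lt hrl
  obtain ⟨μ, hrμ, hμl⟩ := exists_between hrl
  have hbound : ∀ᶠ N : ℕ in atTop, entrySum (T ^ N) / l ^ N ≤ (μ / l) ^ N := by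
    filter_upwards [hlim.eventually_lt_const hrμ, eventually_ge_atTop 1] with N hN hN1
    have hS := entrySum_nonneg (Matrix.pow_apply_nonneg hT N)
    rw [div_pow]
    gcongr
    have := ((Real.rpow_inv_lt_iff_of_pos hS (by linarith) (by positivity)).mp hN).le
    rwa [Real.rpow_natCast] at this
  exact squeeze_zero' (Eventually.of_forall fun N =>
    div_nonneg (entrySum_nonneg (Matrix.pow_apply_nonneg hT N)) (by positivity)) hbound
    (tendsto_pow_atTop_nhds_zero_of_lt_one (div_nonneg (hr.trans hrμ.le) hl.le)
      ((div_lt_one hl).mpr hμl))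

theorem tendsto_inv_smul_pow (hT : ∀ i j, 0 ≤ T i j) {l : ℝ} (hl : 0 < l)
    (hdecay : Tendsto (fun N : ℕ => entrySum (T ^ N) / l ^ N) atTop (𝓝 0)) :
    Tendsto (fun N => (l⁻¹ • T) ^ N) atTop (𝓝 0) := by
  refine tendsto_pi_nhds.mpr fun i => tendsto_pi_nhds.mpr fun j => ?_
  refine squeeze_zero (fun N => ?_) (fun N => ?_) hdecay
  · simp only [smul_pow, Matrix.smul_apply, smul_eq_mul]
    exact mul_nonneg (by positivity) (Matrix.pow_apply_nonneg hT N i j)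
  · simp only [smul_pow, Matrix.smul_apply, smul_eq_mul, inv_pow, inv_mul_eq_div]
    gcongr
    exact (Finset.single_le_sum (fun j _ => Matrix.pow_apply_nonneg hT N i j) (mem_univ j)).trans
      (rowSum_le_entrySum (Matrix.pow_apply_nonneg hT N) i)

theorem sum_range_le_entrySum_resolvent (hT : ∀ i j, 0 ≤ T i j) {l : ℝ} (hl : 0 < l)
    (hres : l ∈ resolventSet ℝ T) (hdecay : Tendsto (fun N => (l⁻¹ • T) ^ N) atTop (𝓝 0))
    (N : ℕ) : ∑ L ∈ range N, entrySum (T ^ L) / l ^ (L + 1) ≤ entrySum (resolvent T l) := by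
  have hsum : ∀ N, entrySum (l⁻¹ • ∑ L ∈ range N, (l⁻¹ • T) ^ L) =
      ∑ L ∈ range N, entrySum (T ^ L) / l ^ (L + 1) := fun N => by
    simp only [entrySum_smul, entrySum_sum, smul_pow, Finset.mul_sum]
    refine Finset.sum_congr rfl fun L _ => ?_
    rw [pow_succ', div_eq_inv_mul, mul_inv, inv_pow, mul_assoc]
  have hlim : Tendsto (fun N => ∑ L ∈ range N, entrySum (T ^ L) / l ^ (L + 1)) atTop
      (𝓝 (entrySum (resolvent T l))) := by
    simp only [← hsum, smul_geom_sum_eq_resolvent_sub hl.ne' hres]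
    refine (entrySum_continuous.tendsto _).comp ?_
    simpa using tendsto_const_nhds.sub (hdecay.const_mul (resolvent T l))
  refine (monotone_nat_of_le_succ fun N => ?_).ge_of_tendsto hlim N
  rw [Finset.sum_range_succ, le_add_iff_nonneg_right]
  exact div_nonneg (entrySum_nonneg (Matrix.pow_apply_nonneg hT N)) (by positivity)

section Resolvent

-- Any algebra norm inducing the entrywise topology would do; it only serves to make
-- `Ring.inverse` continuous at units.
attribute [local instance] Matrix.linftyOpNormedRing Matrix.linftyOpNormedAlgebra

theorem continuousAt_entrySum_resolvent {l : ℝ} (hl : l ∈ resolventSet ℝ T) :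
    ContinuousAt (fun k : ℝ => entrySum (resolvent T k)) l := by
  have h : ContinuousAt (resolvent T) l :=
    (NormedRing.inverse_continuousAt hl.unit).comp_of_eq (by fun_prop) rfl
  exact entrySum_continuous.continuousAt.comp h

end Resolvent

theorem hasSum_pow_div_pow_succ {r l : ℝ} (hr : 0 ≤ r) (hrl : r < l) :
    HasSum (fun L : ℕ => r ^ L / l ^ (L + 1)) (l - r)⁻¹ := by
  have hl : 0 < l := hr.trans_lt hrl
  have h := (hasSum_geometric_of_lt_one (div_nonneg hr hl.le) ((div_lt_one hl).mpr hrl)).mul_left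
    l⁻¹
  have hterm : (fun L : ℕ => r ^ L / l ^ (L + 1)) = fun L => l⁻¹ * (r / l) ^ L := by
    funext L
    rw [div_pow, pow_succ]
    field_simp
  rwa [hterm, show (l - r)⁻¹ = l⁻¹ * (1 - r / l)⁻¹ by field_simp]

theorem mem_spectrum_of_tendsto (hT : ∀ i j, 0 ≤ T i j) {r : ℝ} (hr : 0 < r)
    (hpow : ∀ L, r ^ L ≤ entrySum (T ^ L))
    (hlim : Tendsto (fun L : ℕ => entrySum (T ^ L) ^ ((L : ℝ)⁻¹)) atTop (𝓝 r))
    (hub : ∀ x ∈ spectrum ℝ T, |x| ≤ r) : r ∈ spectrum ℝ T := by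
  intro hres
  set g := fun k : ℝ => entrySum (resolvent T k)
  have hbound : ∀ l ∈ Set.Ioi r, (l - r)⁻¹ ≤ g l := fun l hrl => by
    have hl0 : 0 < l := hr.trans hrl
    have hl : l ∈ resolventSet ℝ T := spectrum.mem_resolventSet_iff.mpr
      (spectrum.notMem_iff.mp fun hl => (hrl.trans_le (le_abs_self l)).not_ge (hub l hl))
    rw [← (hasSum_pow_div_pow_succ hr.le hrl).tsum_eq]
    refine Real.tsum_le_of_sum_range_le (fun L => by positivity) fun N => ?_
    refine (Finset.sum_le_sum fun L _ => ?_).trans (sum_range_le_entrySum_resolvent hT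
      hl0 hl (tendsto_inv_smul_pow hT hl0 (tendsto_entrySum_pow_div_pow hT hr.le hrl hlim)) N)
    exact div_le_div_of_nonneg_right (hpow L) (by positivity)
  have hblowup : Tendsto (fun l => (l - r)⁻¹) (𝓝[>] r) atTop := by
    refine tendsto_inv_nhdsGT_zero.comp (tendsto_nhdsWithin_of_tendsto_nhds_of_eventually_within _
      ?_ ?_)
    · exact ((continuous_sub_right r).tendsto' r 0 (sub_self r)).mono_left nhdsWithin_le_nhds
    · filter_upwards [self_mem_nhdsWithin] with l (hl : r < l) using sub_pos.mpr hl
  exact not_tendsto_atTop_of_tendsto_nhds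
    ((continuousAt_entrySum_resolvent hres).mono_left nhdsWithin_le_nhds)
    (tendsto_atTop_mono' _ (eventually_nhdsWithin_of_forall hbound) hblowup)

theorem abs_le_entrySum_pow_rpow (hT : ∀ i j, 0 ≤ T i j) {x : ℝ} (hx : x ∈ spectrum ℝ T) {L : ℕ}
    (hL : L ≠ 0) : |x| ≤ entrySum (T ^ L) ^ ((L : ℝ)⁻¹) := by
  have h := abs_pow_le_of_mem_spectrum hT hx (rowSum_le_entrySum (Matrix.pow_apply_nonneg hT L))
  rw [← Real.pow_rpow_inv_natCast (abs_nonneg x) hL]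
  exact Real.rpow_le_rpow (by positivity) h (by positivity)

theorem entrySum_pow_eq_zero_of_le (hT : ∀ i j, 0 ≤ T i j) {L₀ L : ℕ}
    (hL₀ : entrySum (T ^ L₀) ≤ 0) (hL : L₀ ≤ L) : entrySum (T ^ L) = 0 := by
  refine le_antisymm ?_ (entrySum_nonneg (Matrix.pow_apply_nonneg hT L))
  rw [← Nat.add_sub_cancel' hL, pow_add]
  exact (entrySum_mul_le (Matrix.pow_apply_nonneg hT _) (Matrix.pow_apply_nonneg hT _)).trans
    (mul_nonpos_of_nonpos_of_nonneg hL₀ (entrySum_nonneg (Matrix.pow_apply_nonneg hT _)))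

theorem spectralRadius_toReal_le_rpow (hT : ∀ i j, 0 ≤ T i j) {m : ℕ} (hm : m ≠ 0) {θ : ℝ}
    (hθ : 0 ≤ θ) (hrow : ∀ i, ∑ j, (T ^ m) i j ≤ θ) :
    (spectralRadius ℝ T).toReal ≤ θ ^ (m : ℝ)⁻¹ := by
  refine ENNReal.toReal_le_of_le_ofReal (by positivity) (spectralRadius_le_ofReal fun x hx => ?_)
  rw [← pow_le_pow_iff_left₀ (abs_nonneg x) (by positivity) hm, Real.rpow_inv_natCast_pow hθ hm]
  exact abs_pow_le_of_mem_spectrum hT hx hrow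

theorem spectralRadius_toReal_lt_one (hT : ∀ i j, 0 ≤ T i j) {m : ℕ} (hm : m ≠ 0) {θ : ℝ}
    (hθ : θ < 1) (hrow : ∀ i, ∑ j, (T ^ m) i j ≤ θ) : (spectralRadius ℝ T).toReal < 1 :=
  (spectralRadius_toReal_le_rpow hT hm (le_max_right θ 0)
    fun i => (hrow i).trans (le_max_left θ 0)).trans_lt
    (Real.rpow_lt_one (le_max_right θ 0) (max_lt hθ one_pos) (by positivity))

theorem tendsto_entrySum_pow_rpow_spectralRadius (hT : ∀ i j, 0 ≤ T i j) :
    Tendsto (fun L : ℕ => entrySum (T ^ L) ^ ((L : ℝ)⁻¹)) atTop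
      (𝓝 (spectralRadius ℝ T).toReal) := by
  by_cases hpos : ∀ L, 0 < entrySum (T ^ L)
  · obtain ⟨r, hr, hpow, hlim⟩ := exists_tendsto_entrySum_pow_rpow hT hpos
    have hub : ∀ x ∈ spectrum ℝ T, |x| ≤ r := fun x hx => ge_of_tendsto hlim <|
      (eventually_ne_atTop 0).mono fun L hL => abs_le_entrySum_pow_rpow hT hx hL
    rwa [spectralRadius_toReal_eq (mem_spectrum_of_tendsto hT hr hpow hlim hub) hub]
  · obtain ⟨L₀, hL₀⟩ : ∃ L₀, entrySum (T ^ L₀) ≤ 0 := by simpa using hpos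
    have hρ : (spectralRadius ℝ T).toReal = 0 := by
      refine le_antisymm ?_ ENNReal.toReal_nonneg
      have h0 : ((L₀ : ℝ) + 1)⁻¹ ≠ 0 := by positivity
      simpa [Real.zero_rpow h0] using
        spectralRadius_toReal_le_rpow hT L₀.succ_ne_zero le_rfl fun i =>
          (rowSum_le_entrySum (Matrix.pow_apply_nonneg hT _) i).trans
            (entrySum_pow_eq_zero_of_le hT hL₀ L₀.le_succ).le
    rw [hρ]
    refine tendsto_const_nhds.congr' ?_
    filter_upwards [eventually_ge_atTop (max L₀ 1)] with L hL
    rw [entrySum_pow_eq_zero_of_le hT hL₀ (le_of_max_le_left hL),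
      Real.zero_rpow (inv_ne_zero (Nat.cast_ne_zero.mpr (by omega)))]

end Pow

end NonnegMatrix

section Words

variable {Q A : Type*} {δ : Q → A → Option Q} {P : Q → A → ℝ}

theorem stepWord_append (p : Q) (u v : List A) :
    stepWord δ p (u ++ v) = (stepWord δ p u).bind fun q => stepWord δ q v := by
  induction u generalizing p with
  | nil => simp [stepWord]
  | cons a u ih => cases h : δ p a <;> simp [stepWord, h, ih]

theorem exists_stepWord_suffix {p r : Q} {u w : List A}
    (h : stepWord δ p (u ++ w) = some r) : ∃ z, stepWord δ z w = some r := by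
  rw [stepWord_append, Option.bind_eq_some_iff] at h
  obtain ⟨z, -, hz⟩ := h
  exact ⟨z, hz⟩

theorem probWord_nonneg (hP : ∀ q a, 0 ≤ P q a) (w : List A) (p : Q) :
    0 ≤ probWord P δ p w := by
  induction w generalizing p with
  | nil => simp [probWord]
  | cons a w ih => cases h : δ p a <;> simp [probWord, h, mul_nonneg (hP p a) (ih _)]

theorem probWord_pos (hP : ∀ q a, 0 ≤ P q a) (hz : ∀ q a, P q a = 0 ↔ δ q a = none)
    {w : List A} {p q : Q} (h : stepWord δ p w = some q) : 0 < probWord P δ p w := by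
  induction w generalizing p with
  | nil => simp [probWord]
  | cons a w ih =>
    cases hpa : δ p a with
    | none => simp [stepWord, hpa] at h
    | some p' =>
      have hPpa : 0 < P p a := (hP p a).lt_of_ne' fun h0 => by simp [(hz p a).mp h0] at hpa
      simp only [stepWord, hpa, Option.bind_some] at h
      simpa [probWord, hpa] using mul_pos hPpa (ih h)

theorem probWord_eq_zero_of_stepWord_eq_none (hz : ∀ q a, P q a = 0 ↔ δ q a = none)
    {w : List A} {p : Q} (h : stepWord δ p w = none) : probWord P δ p w = 0 := by
  induction w generalizing p with
  | nil => simp [stepWord] at h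
  | cons a w ih =>
    cases hpa : δ p a with
    | none => simp [probWord, hpa, (hz p a).mpr hpa]
    | some p' =>
      simp only [stepWord, hpa, Option.bind_some] at h
      simp [probWord, hpa, ih h]

theorem pairStep_eq_some_iff {pq y : Q × Q} {a : A} :
    pairStep δ pq a = some y ↔ δ pq.1 a = some y.1 ∧ δ pq.2 a = some y.2 ∧ y.1 ≠ y.2 := by
  unfold pairStep
  rcases h1 : δ pq.1 a with _ | p' <;> rcases h2 : δ pq.2 a with _ | q' <;> simp
  aesop

theorem stepWord_pairStep_eq_some_iff {p q : Q} (hpq : p ≠ q) (w : List A) (p' q' : Q) :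
    stepWord (pairStep δ) (p, q) w = some (p', q') ↔
      stepWord δ p w = some p' ∧ stepWord δ q w = some q' ∧ p' ≠ q' := by
  induction w generalizing p q with
  | nil => simp [stepWord]; aesop
  | cons a w ih =>
    rcases h1 : δ p a with _ | p₁ <;> rcases h2 : δ q a with _ | q₁ <;>
      simp only [stepWord, pairStep, h1, h2, Option.bind_none, Option.bind_some, reduceCtorEq,
        false_and, and_false]
    by_cases h : p₁ = q₁
    · subst h
      simp only [if_true, Option.bind_none, reduceCtorEq, false_iff, not_and]
      intro hp hq; simp_all
    · simp only [h, if_false, Option.bind_some]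
      exact ih h

theorem not_isResetWord_of_isSome {s : Q × Q} (hs : s.1 ≠ s.2) {w : List A}
    (h : (stepWord (pairStep δ) s w).isSome) : ¬IsResetWord δ w := by
  rintro ⟨r, -, hr⟩
  obtain ⟨⟨p', q'⟩, hy⟩ := Option.isSome_iff_exists.mp h
  obtain ⟨hp, hq, hne⟩ := (stepWord_pairStep_eq_some_iff hs w p' q').mp hy
  exact hne ((hr _ p' hp).trans (hr _ q' hq).symm)

theorem exists_isSome_of_not_isResetWord {w : List A} (hw : ¬IsResetWord δ w) {q q' : Q}
    (hq : stepWord δ q w = some q') :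
    ∃ p, q ≠ p ∧ (stepWord (pairStep δ) (q, p) w).isSome := by
  obtain ⟨p, p', hp, hne⟩ : ∃ p p', stepWord δ p w = some p' ∧ p' ≠ q' := by
    by_contra! h
    exact hw ⟨q', ⟨q, hq⟩, h⟩
  have hqp : q ≠ p := by rintro rfl; simp_all
  exact ⟨p, hqp, by rw [(stepWord_pairStep_eq_some_iff hqp w q' p').mpr ⟨hq, hp, hne.symm⟩]; rfl⟩

end Words

section PairWordWeight

variable {Q A : Type*} {δ : Q → A → Option Q} {P : Q → A → ℝ}

noncomputable def pairWordWeight (δ : Q → A → Option Q) (P : Q → A → ℝ) (s : Q × Q)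
    (w : List A) : ℝ :=
  if (stepWord (pairStep δ) s w).isSome then probWord P δ s.1 w else 0

theorem pairWordWeight_nonneg (hP : ∀ q a, 0 ≤ P q a) (s : Q × Q) (w : List A) :
    0 ≤ pairWordWeight δ P s w := by
  unfold pairWordWeight; split_ifs <;> simp [probWord_nonneg hP]

theorem pairWordWeight_le_probWord (hP : ∀ q a, 0 ≤ P q a) (s : Q × Q) (w : List A) :
    pairWordWeight δ P s w ≤ probWord P δ s.1 w := by
  unfold pairWordWeight; split_ifs <;> simp [probWord_nonneg hP]

theorem pairWordWeight_cons (s : Q × Q) (a : A) (w : List A) :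
    pairWordWeight δ P s (a :: w) =
      (pairStep δ s a).elim 0 fun u => P s.1 a * pairWordWeight δ P u w := by
  cases h : pairStep δ s a with
  | none => simp [pairWordWeight, stepWord, h]
  | some u =>
    have h1 : δ s.1 a = some u.1 := (pairStep_eq_some_iff.mp h).1
    simp [pairWordWeight, stepWord, probWord, h, h1, mul_ite]

variable [Fintype Q]

theorem mul_pairWordWeight_le (hP : ∀ q a, 0 ≤ P q a) {π : Q → ℝ} (hπ : ∀ q, 0 ≤ π q)
    (s : PairState Q) (w : List A) :
    π s.val.1 * pairWordWeight δ P s.val w ≤ if IsResetWord δ w then 0 else Ppi δ P π w := by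
  unfold pairWordWeight
  split_ifs with halive hres hres
  · exact absurd hres (not_isResetWord_of_isSome s.property halive)
  · exact Finset.single_le_sum (f := fun q => π q * probWord P δ q w)
      (fun q _ => mul_nonneg (hπ q) (probWord_nonneg hP w q)) (mem_univ _)
  · simp
  · simpa [Ppi] using Finset.sum_nonneg fun q _ => mul_nonneg (hπ q) (probWord_nonneg hP w q)

theorem Ppi_le_sum_pairWordWeight (hP : ∀ q a, 0 ≤ P q a)
    (hz : ∀ q a, P q a = 0 ↔ δ q a = none) {π : Q → ℝ} (hπ1 : ∀ q, π q ≤ 1) {w : List A}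
    (hw : ¬IsResetWord δ w) : Ppi δ P π w ≤ ∑ s : PairState Q, pairWordWeight δ P s.val w := by
  rw [Ppi, ← Finset.sum_fiberwise univ (fun s : PairState Q => s.val.1)]
  refine Finset.sum_le_sum fun q _ => ?_
  cases hq : stepWord δ q w with
  | none =>
    rw [probWord_eq_zero_of_stepWord_eq_none hz hq, mul_zero]
    exact Finset.sum_nonneg fun s _ => pairWordWeight_nonneg hP _ w
  | some q' =>
    obtain ⟨p, hqp, halive⟩ := exists_isSome_of_not_isResetWord hw hq
    have hmem : ⟨(q, p), hqp⟩ ∈ univ.filter fun s : PairState Q => s.val.1 = q := by simp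
    refine le_trans ?_ (Finset.single_le_sum (fun s _ => pairWordWeight_nonneg hP _ w) hmem)
    rw [pairWordWeight, if_pos halive]
    exact mul_le_of_le_one_left (probWord_nonneg hP w q) (hπ1 q)

end PairWordWeight

section WordSums

variable {Q A : Type*} [Fintype A] {δ : Q → A → Option Q} {P : Q → A → ℝ}

theorem sum_fin_succ_pi {M : Type*} [AddCommMonoid M] {L : ℕ} (f : (Fin (L + 1) → A) → M) :
    ∑ w, f w = ∑ a, ∑ w : Fin L → A, f (Fin.cons a w) := by
  rw [← (Fin.consEquiv fun _ => A).sum_comp, Fintype.sum_prod_type]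
  rfl

theorem sum_probWord (hz : ∀ q a, P q a = 0 ↔ δ q a = none) (hsum : ∀ q, ∑ a, P q a = 1)
    (L : ℕ) (p : Q) : ∑ w : Fin L → A, probWord P δ p (List.ofFn w) = 1 := by
  induction L generalizing p with
  | zero => simp [probWord]
  | succ L ih =>
    rw [sum_fin_succ_pi, ← hsum p]
    refine Finset.sum_congr rfl fun a _ => ?_
    cases h : δ p a with
    | none => simp [probWord, h, (hz p a).mpr h]
    | some p' => simp [probWord, h, ← Finset.mul_sum, ih p']

noncomputable def pairSurvivalProb (δ : Q → A → Option Q) (P : Q → A → ℝ) (L : ℕ) (s : Q × Q) :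
    ℝ :=
  ∑ w : Fin L → A, pairWordWeight δ P s (List.ofFn w)

theorem pairSurvivalProb_succ (L : ℕ) (s : Q × Q) :
    pairSurvivalProb δ P (L + 1) s =
      ∑ a, (pairStep δ s a).elim 0 fun u => P s.1 a * pairSurvivalProb δ P L u := by
  rw [pairSurvivalProb, sum_fin_succ_pi]
  refine Finset.sum_congr rfl fun a _ => ?_
  cases h : pairStep δ s a <;>
    simp [pairSurvivalProb, pairWordWeight_cons, h, Finset.mul_sum]

theorem pairSurvivalProb_le_one (hP : ∀ q a, 0 ≤ P q a) (hz : ∀ q a, P q a = 0 ↔ δ q a = none)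
    (hsum : ∀ q, ∑ a, P q a = 1) (L : ℕ) (s : Q × Q) : pairSurvivalProb δ P L s ≤ 1 :=
  (Finset.sum_le_sum fun _ _ => pairWordWeight_le_probWord hP s _).trans
    (sum_probWord hz hsum L s.1).le

theorem pairSurvivalProb_le_one_sub (hP : ∀ q a, 0 ≤ P q a)
    (hz : ∀ q a, P q a = 0 ↔ δ q a = none) (hsum : ∀ q, ∑ a, P q a = 1) {s : Q × Q}
    {l : List A} (hdead : stepWord (pairStep δ) s l = none) :
    pairSurvivalProb δ P l.length s ≤ 1 - probWord P δ s.1 l := by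
  have hl := Finset.mem_univ l.get
  have hsplit := Finset.add_sum_erase univ
    (fun w : Fin l.length → A => probWord P δ s.1 (List.ofFn w)) hl
  rw [List.ofFn_get, sum_probWord hz hsum] at hsplit
  have hdrop : pairSurvivalProb δ P l.length s =
      ∑ w ∈ univ.erase l.get, pairWordWeight δ P s (List.ofFn w) := by
    rw [pairSurvivalProb, ← Finset.add_sum_erase univ _ hl, List.ofFn_get]
    simp [pairWordWeight, hdead]
  rw [hdrop, ← hsplit, add_sub_cancel_left]
  exact Finset.sum_le_sum fun w _ => pairWordWeight_le_probWord hP s _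

end WordSums

section PairMatrix

variable {Q A : Type*} [Fintype A] {δ : Q → A → Option Q} {P : Q → A → ℝ}

theorem pairMatrix_nonneg (hP : ∀ q a, 0 ≤ P q a) (s t : PairState Q) :
    0 ≤ pairMatrix δ P s t :=
  Finset.sum_nonneg fun a _ => by split_ifs <;> simp [hP]

variable [Fintype Q]

theorem sum_pairMatrix_mul (f : Q × Q → ℝ) (s : PairState Q) :
    ∑ u, pairMatrix δ P s u * f u.val =
      ∑ a, (pairStep δ s.val a).elim 0 fun u => P s.val.1 a * f u := by
  simp only [pairMatrix, Finset.sum_mul]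
  rw [Finset.sum_comm]
  refine Finset.sum_congr rfl fun a _ => ?_
  cases h : pairStep δ s.val a with
  | none => simp
  | some y =>
    rw [Finset.sum_eq_single ⟨y, (pairStep_eq_some_iff.mp h).2.2⟩ (fun u _ hu => ?_) (by simp)]
    · simp
    · simp only [Option.some.injEq, ite_mul, zero_mul, ite_eq_right_iff]
      exact fun hyu => absurd (Subtype.ext hyu.symm) hu

theorem rowSum_pairMatrix_pow (L : ℕ) (s : PairState Q) :
    ∑ t, (pairMatrix δ P ^ L) s t = pairSurvivalProb δ P L s.val := by
  induction L generalizing s with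
  | zero => simp [pairSurvivalProb, pairWordWeight, stepWord, probWord, Matrix.one_apply]
  | succ L ih =>
    simp only [pow_succ', Matrix.mul_apply]
    rw [Finset.sum_comm]
    simp only [← Finset.mul_sum, ih]
    rw [sum_pairMatrix_mul, pairSurvivalProb_succ]

end PairMatrix

section Synchronization

variable {Q A : Type*} [Fintype Q] [Fintype A] {δ : Q → A → Option Q} {P : Q → A → ℝ}
  {π : Q → ℝ}

theorem nsynProb_nonneg (hP : ∀ q a, 0 ≤ P q a) (hπ : ∀ q, 0 ≤ π q) (L : ℕ) :
    0 ≤ nsynProb δ P π L :=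
  Finset.sum_nonneg fun w _ => by
    split_ifs
    exacts [le_rfl, Finset.sum_nonneg fun q _ => mul_nonneg (hπ q) (probWord_nonneg hP _ q)]

theorem nsynProb_le_entrySum (hP : ∀ q a, 0 ≤ P q a) (hz : ∀ q a, P q a = 0 ↔ δ q a = none)
    (hπ1 : ∀ q, π q ≤ 1) (L : ℕ) : nsynProb δ P π L ≤ entrySum (pairMatrix δ P ^ L) := by
  have hsum : entrySum (pairMatrix δ P ^ L) =
      ∑ w : Fin L → A, ∑ s : PairState Q, pairWordWeight δ P s.val (List.ofFn w) := by
    simp only [entrySum, rowSum_pairMatrix_pow, pairSurvivalProb]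
    exact Finset.sum_comm
  rw [hsum, nsynProb]
  refine Finset.sum_le_sum fun w _ => ?_
  split_ifs with hres
  · exact Finset.sum_nonneg fun s _ => pairWordWeight_nonneg hP _ _
  · exact Ppi_le_sum_pairWordWeight hP hz hπ1 hres

theorem mul_rowSum_le_nsynProb (hP : ∀ q a, 0 ≤ P q a) (hπ : ∀ q, 0 ≤ π q) (L : ℕ)
    (s : PairState Q) : π s.val.1 * ∑ t, (pairMatrix δ P ^ L) s t ≤ nsynProb δ P π L := by
  rw [rowSum_pairMatrix_pow, pairSurvivalProb, Finset.mul_sum]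
  exact Finset.sum_le_sum fun w _ => mul_pairWordWeight_le hP hπ s _

theorem mul_entrySum_le_nsynProb (hP : ∀ q a, 0 ≤ P q a) {c : ℝ} (hc : 0 ≤ c)
    (hcπ : ∀ q, c ≤ π q) (L : ℕ) :
    c / (Fintype.card (PairState Q) + 1) * entrySum (pairMatrix δ P ^ L) ≤
      nsynProb δ P π L := by
  have hπ : ∀ q, 0 ≤ π q := fun q => hc.trans (hcπ q)
  have hT := Matrix.pow_apply_nonneg (pairMatrix_nonneg (δ := δ) hP) L
  have hcard : c * entrySum (pairMatrix δ P ^ L) ≤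
      Fintype.card (PairState Q) * nsynProb δ P π L := by
    rw [entrySum, Finset.mul_sum, ← nsmul_eq_mul, ← Finset.card_univ, ← Finset.sum_const]
    exact Finset.sum_le_sum fun s _ => (mul_le_mul_of_nonneg_right (hcπ s.val.1)
      (Finset.sum_nonneg fun t _ => hT s t)).trans (mul_rowSum_le_nsynProb hP hπ L s)
  rw [div_mul_eq_mul_div, div_le_iff₀ (by positivity)]
  linarith [nsynProb_nonneg (δ := δ) hP hπ L]

end Synchronization

section Exact

variable {Q A : Type*} [Fintype Q] [Fintype A]

theorem exists_killing_word (M : EpsMachine Q A) (hexact : IsExact M) (s : PairState Q) :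
    ∃ l, stepWord (pairStep M.δ) s.val l = none ∧ 0 < probWord M.P M.δ s.val.1 l := by
  obtain ⟨w, r, ⟨q, hq⟩, hall⟩ := hexact
  obtain ⟨u, hu⟩ := M.strong_conn s.val.1 q
  have hstep : stepWord M.δ s.val.1 (u ++ w) = some r := by simp [stepWord_append, hu, hq]
  refine ⟨u ++ w, ?_, probWord_pos M.nonneg M.zero_iff hstep⟩
  cases h : stepWord (pairStep M.δ) s.val (u ++ w) with
  | none => rfl
  | some y =>
    obtain ⟨h1, h2, hne⟩ := (stepWord_pairStep_eq_some_iff s.property _ y.1 y.2).mp h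
    obtain ⟨z₁, hz₁⟩ := exists_stepWord_suffix h1
    obtain ⟨z₂, hz₂⟩ := exists_stepWord_suffix h2
    exact absurd ((hall z₁ _ hz₁).trans (hall z₂ _ hz₂).symm) hne

theorem exists_rowSum_pairMatrix_pow_le (M : EpsMachine Q A) (hexact : IsExact M) :
    ∃ m θ, m ≠ 0 ∧ θ < 1 ∧ ∀ s, ∑ t, (pairMatrix M.δ M.P ^ m) s t ≤ θ := by
  choose l hdead hpos using exists_killing_word M hexact
  obtain ⟨ε, hε, hεl⟩ := exists_pos_forall_le hpos
  have hT1 : ∀ s : PairState Q, ∑ t, pairMatrix M.δ M.P s t ≤ 1 := fun s => by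
    simpa using (rowSum_pairMatrix_pow 1 s).trans_le
      (pairSurvivalProb_le_one M.nonneg M.zero_iff M.sum_one 1 s.val)
  set m := univ.sup (fun s => (l s).length) + 1
  refine ⟨m, 1 - ε, by omega, by linarith, fun s => ?_⟩
  have hlen : (l s).length ≤ m :=
    (Finset.le_sup (f := fun s => (l s).length) (mem_univ s)).trans (Nat.le_succ _)
  calc ∑ t, (pairMatrix M.δ M.P ^ m) s t
      ≤ ∑ t, (pairMatrix M.δ M.P ^ (l s).length) s t :=
        rowSum_pow_antitone (pairMatrix_nonneg M.nonneg) hT1 hlen s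
    _ = pairSurvivalProb M.δ M.P (l s).length s.val := rowSum_pairMatrix_pow _ s
    _ ≤ 1 - probWord M.P M.δ s.val.1 (l s) :=
        pairSurvivalProb_le_one_sub M.nonneg M.zero_iff M.sum_one (hdead s)
    _ ≤ 1 - ε := by linarith [hεl s]

end Exact

/-- for an exact ε-machine with steady state distribution `π`, the limit
`lim_{L→∞} (P_π(NSYN_L))^{1/L}` exists and equals the spectral radius of `T(A₂)`, and this
synchronization rate constant is `< 1`. -/
theorem stmt3 {Q A : Type*} [Fintype Q] [Fintype A] (M : EpsMachine Q A)
    (hexact : IsExact M) (π : Q → ℝ) (hπ : IsStationaryDist M.δ M.P π) :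
    Filter.Tendsto (fun L : ℕ => nsynProb M.δ M.P π L ^ ((L : ℝ)⁻¹)) Filter.atTop
        (nhds ((spectralRadius ℝ (pairMatrix M.δ M.P)).toReal)) ∧
      (spectralRadius ℝ (pairMatrix M.δ M.P)).toReal < 1 := by
  obtain ⟨hπpos, hπ1, -⟩ := hπ
  have hT := pairMatrix_nonneg (δ := M.δ) M.nonneg
  have hπle : ∀ q, π q ≤ 1 := fun q =>
    hπ1 ▸ Finset.single_le_sum (fun q _ => (hπpos q).le) (mem_univ q)
  obtain ⟨c, hc, hcπ⟩ := exists_pos_forall_le hπpos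
  obtain ⟨m, θ, hm, hθ, hrow⟩ := exists_rowSum_pairMatrix_pow_le M hexact
  exact ⟨tendsto_rpow_inv_of_mul_le_of_le (by positivity)
      (nsynProb_nonneg M.nonneg fun q => (hπpos q).le) (mul_entrySum_le_nsynProb M.nonneg hc.le hcπ)
      (nsynProb_le_entrySum M.nonneg M.zero_iff hπle) (tendsto_entrySum_pow_rpow_spectralRadius hT),
    spectralRadius_toReal_lt_one hT hm hθ hrow⟩
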